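/- If M is a weakly Laskerian R-module and N is a finitely generated R-module, then Ext^i_R(N, M) is weakly Laskerian for all i ≥ 0. -/

import Mathlib

open CategoryTheory

/-- An `R`-module `M` is weakly Laskerian if every quotient of `M`
has finitely many associated primes. -/
def WeaklyLaskerian (R M : Type*) [CommRing R] [AddCommGroup M] [Module R M] : Prop :=
  ∀ N : Submodule R M, (associatedPrimes R (M ⧸ N)).Finite

/-!
Since `R` is Noetherian, `N` has a resolution `F_•` by finite free modules, so `Ext^i(N, M)` is
a subquotient of `Hom(F_i, M) ≅ M^n`. Weakly Laskerian modules are closed under quotients,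
submodules and extensions (the associated primes of a module lie in those of a submodule and of
the quotient by it), hence under finite direct sums and subquotients.
-/

universe u

namespace WeaklyLaskerian

variable {R M M' M'' : Type*} [CommRing R] [AddCommGroup M] [Module R M]
  [AddCommGroup M'] [Module R M'] [AddCommGroup M''] [Module R M'']

theorem finite_associatedPrimes (h : WeaklyLaskerian R M) : (associatedPrimes R M).Finite := by
  rw [LinearEquiv.AssociatedPrimes.eq (Submodule.quotEquivOfEqBot ⊥ rfl).symm]
  exact h ⊥

theorem of_subsingleton [Subsingleton M] : WeaklyLaskerian R M := fun N => by
  have : Subsingleton (M ⧸ N) := (Submodule.mkQ_surjective N).subsingleton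
  simp [associatedPrimes.eq_empty_of_subsingleton]

theorem of_surjective (h : WeaklyLaskerian R M) (f : M →ₗ[R] M') (hf : Function.Surjective f) :
    WeaklyLaskerian R M' := fun N => by
  rw [← LinearEquiv.AssociatedPrimes.eq
    ((N.mkQ ∘ₗ f).quotKerEquivOfSurjective ((N.mkQ_surjective).comp hf))]
  exact h _

theorem of_linearEquiv (h : WeaklyLaskerian R M) (e : M ≃ₗ[R] M') : WeaklyLaskerian R M' :=
  h.of_surjective e e.surjective

theorem quotient (h : WeaklyLaskerian R M) (N : Submodule R M) : WeaklyLaskerian R (M ⧸ N) :=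
  h.of_surjective N.mkQ N.mkQ_surjective

theorem of_injective (h : WeaklyLaskerian R M) (f : M' →ₗ[R] M) (hf : Function.Injective f) :
    WeaklyLaskerian R M' := fun N => by
  have hinj : Function.Injective (N.mapQ (N.map f) f (Submodule.le_comap_map f N)) := by
    rw [← LinearMap.ker_eq_bot, Submodule.ker_mapQ, Submodule.comap_map_eq_of_injective hf,
      Submodule.mkQ_map_self]
  exact (h _).subset (associatedPrimes.subset_of_injective hinj)

theorem submodule (h : WeaklyLaskerian R M) (N : Submodule R M) : WeaklyLaskerian R N :=
  h.of_injective N.subtype N.injective_subtype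

theorem of_exact {f : M' →ₗ[R] M} {g : M →ₗ[R] M''}
    (hfg : Function.Exact f g) (hg : Function.Surjective g)
    (h' : WeaklyLaskerian R M') (h'' : WeaklyLaskerian R M'') : WeaklyLaskerian R M := fun N => by
  set S := LinearMap.range (N.mkQ ∘ₗ f)
  have hS : WeaklyLaskerian R S :=
    h'.of_surjective (N.mkQ ∘ₗ f).rangeRestrict (N.mkQ ∘ₗ f).surjective_rangeRestrict
  have hQ : WeaklyLaskerian R ((M ⧸ N) ⧸ S) := by
    have hle : LinearMap.range f ≤ LinearMap.ker (S.mkQ ∘ₗ N.mkQ) := by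
      rintro _ ⟨x, rfl⟩
      simp [S]
    exact (h''.of_linearEquiv (hfg.linearEquivOfSurjective hg).symm).of_surjective
      ((LinearMap.range f).liftQ _ hle)
      (LinearMap.surjective_range_liftQ _ (S.mkQ_surjective.comp N.mkQ_surjective))
  exact (hS.finite_associatedPrimes.union hQ.finite_associatedPrimes).subset
    (associatedPrimes.subset_union_of_exact S.injective_subtype (LinearMap.exact_subtype_mkQ S))

theorem prod (h : WeaklyLaskerian R M) (h' : WeaklyLaskerian R M') :
    WeaklyLaskerian R (M × M') :=
  of_exact .inl_snd LinearMap.snd_surjective h h'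

theorem pi_fin (h : WeaklyLaskerian R M) : ∀ n : ℕ, WeaklyLaskerian R (Fin n → M)
  | 0 => of_subsingleton
  | n + 1 => (h.prod (h.pi_fin n)).of_linearEquiv (Fin.consLinearEquiv R fun _ => M)

theorem linearMap [Module.Finite R M'] (h : WeaklyLaskerian R M) :
    WeaklyLaskerian R (M' →ₗ[R] M) := by
  obtain ⟨n, π, hπ⟩ := Module.Finite.exists_fin' R M'
  exact ((h.pi_fin n).of_linearEquiv (LinearEquiv.piRing R M (Fin n) R).symm).of_injective
    (π.lcomp R M) (LinearMap.lcomp_injective_of_surjective π hπ)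

end WeaklyLaskerian

namespace FGModuleCat

variable {R : Type u} [CommRing R]

noncomputable def coverRank (K : FGModuleCat.{u} R) : ℕ :=
  (Module.Finite.exists_fin' R K).choose

noncomputable def cover (K : FGModuleCat.{u} R) : (Fin K.coverRank → R) →ₗ[R] K :=
  (Module.Finite.exists_fin' R K).choose_spec.choose

theorem cover_surjective (K : FGModuleCat.{u} R) : Function.Surjective K.cover :=
  (Module.Finite.exists_fin' R K).choose_spec.choose_spec

variable [IsNoetherianRing R]

noncomputable def syzygy (K : FGModuleCat.{u} R) : FGModuleCat.{u} R :=
  .of R (LinearMap.ker K.cover)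

noncomputable def syzygies (K : FGModuleCat.{u} R) : ℕ → FGModuleCat.{u} R
  | 0 => K
  | n + 1 => (K.syzygies n).syzygy

-- Stated with domain `K.syzygy` rather than the kernel, so that the module instances agree
-- syntactically with those of `K.syzygy.cover` in `syzygyMap`.
noncomputable def syzygyι (K : FGModuleCat.{u} R) : K.syzygy →ₗ[R] Fin K.coverRank → R :=
  (LinearMap.ker K.cover).subtype

noncomputable def syzygyMap (K : FGModuleCat.{u} R) :
    (Fin K.syzygy.coverRank → R) →ₗ[R] Fin K.coverRank → R :=
  K.syzygyι ∘ₗ K.syzygy.cover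

theorem range_syzygyMap (K : FGModuleCat.{u} R) :
    LinearMap.range K.syzygyMap = LinearMap.ker K.cover := by
  rw [syzygyMap, LinearMap.range_comp_of_range_eq_top _
    (LinearMap.range_eq_top.2 K.syzygy.cover_surjective)]
  exact Submodule.range_subtype _

theorem ker_syzygyMap (K : FGModuleCat.{u} R) :
    LinearMap.ker K.syzygyMap = LinearMap.ker K.syzygy.cover :=
  LinearMap.ker_comp_of_ker_eq_bot _ (Submodule.ker_subtype _)

theorem range_syzygyMap_syzygy (K : FGModuleCat.{u} R) :
    LinearMap.range K.syzygy.syzygyMap = LinearMap.ker K.syzygyMap := by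
  rw [range_syzygyMap, ker_syzygyMap]

noncomputable def freeResolutionComplex (K : FGModuleCat.{u} R) :
    ChainComplex (ModuleCat.{u} R) ℕ :=
  ChainComplex.of (fun n => ModuleCat.of R (Fin (K.syzygies n).coverRank → R))
    (fun n => ModuleCat.ofHom (K.syzygies n).syzygyMap)
    (fun _ => ModuleCat.hom_ext (LinearMap.range_le_ker_iff.1 (range_syzygyMap_syzygy _).le))

noncomputable def freeResolution (K : FGModuleCat.{u} R) : ProjectiveResolution K.obj where
  complex := K.freeResolutionComplex
  projective n := by dsimp [freeResolutionComplex]; infer_instance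
  π := (ChainComplex.toSingle₀Equiv _ _).symm ⟨ModuleCat.ofHom K.cover,
    ModuleCat.hom_ext (LinearMap.range_le_ker_iff.1 (range_syzygyMap K).le)⟩
  quasiIso := ⟨fun n => by
    cases n with
    | zero =>
      rw [ChainComplex.quasiIsoAt₀_iff, ShortComplex.quasiIso_iff_of_zeros' _ rfl rfl rfl]
      refine ⟨?_, (ModuleCat.epi_iff_surjective _).2 K.cover_surjective⟩
      rw [ShortComplex.moduleCat_exact_iff_range_eq_ker]
      exact range_syzygyMap K
    | succ n =>
      rw [quasiIsoAt_iff_exactAt' (hL := ChainComplex.exactAt_succ_single_obj ..),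
        HomologicalComplex.exactAt_iff' _ (n + 1 + 1) (n + 1) n (by simp) (by simp),
        ShortComplex.moduleCat_exact_iff_range_eq_ker]
      simp only [freeResolutionComplex, HomologicalComplex.shortComplexFunctor'_obj_f,
        HomologicalComplex.shortComplexFunctor'_obj_g, ChainComplex.of_d]
      exact range_syzygyMap_syzygy (K.syzygies n)⟩

instance (K : FGModuleCat.{u} R) (n : ℕ) : Module.Finite R (K.freeResolution.complex.X n) :=
  inferInstanceAs (Module.Finite R (Fin _ → R))

end FGModuleCat

theorem CategoryTheory.ShortComplex.weaklyLaskerian_homology {R : Type*} [CommRing R]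
    (S : ShortComplex (ModuleCat R)) (h : WeaklyLaskerian R S.X₂) :
    WeaklyLaskerian R S.homology :=
  ((h.submodule _).quotient _).of_linearEquiv S.moduleCatHomologyIso.toLinearEquiv.symm

theorem CategoryTheory.ProjectiveResolution.weaklyLaskerian_ext {R : Type u} [CommRing R]
    {X : ModuleCat.{u} R} (P : ProjectiveResolution X) {Y : ModuleCat.{u} R} (i : ℕ)
    [Module.Finite R (P.complex.X i)] (hY : WeaklyLaskerian R Y) :
    WeaklyLaskerian R (((Ext R (ModuleCat.{u} R) i).obj (Opposite.op X)).obj Y) :=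
  ((P.complex.linearYonedaObj R Y).sc i).weaklyLaskerian_homology
      (hY.linearMap.of_linearEquiv ModuleCat.homLinearEquiv.symm)
    |>.of_linearEquiv (P.isoExt i Y).toLinearEquiv.symm

/-- If `M` is weakly Laskerian and `N` is finitely generated, then
`Ext^i_R(N, M)` is weakly Laskerian for all `i ≥ 0`. -/
theorem weaklyLaskerian_ext
    {R : Type} [CommRing R] [IsNoetherianRing R]
    {M N : Type} [AddCommGroup M] [Module R M] [AddCommGroup N] [Module R N]
    (hM : WeaklyLaskerian R M) (hN : Module.Finite R N) (i : ℕ) :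
    WeaklyLaskerian R
      (((Ext R (ModuleCat.{0} R) i).obj (Opposite.op (ModuleCat.of R N))).obj
        (ModuleCat.of R M)) :=
  (FGModuleCat.of R N).freeResolution.weaklyLaskerian_ext i hM
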